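/- For every pair (x,y) ∈ Δ_m×Δ_n, (x,y) is a stationary point if and only if V(x,y) = f_R(x,y) = f_C(x,y). -/

import Mathlib

open scoped BigOperators Classical
open Matrix Filter

noncomputable section

namespace TS

/-- The probability simplex in `ℝ^k`. -/
def Δ (k : ℕ) : Set (Fin k → ℝ) := {x | (∀ i, 0 ≤ x i) ∧ ∑ i, x i = 1}

/-- Maximum entry of a vector. -/
def vmax {k : ℕ} (u : Fin k → ℝ) : ℝ := ⨆ i, u i

/-- Maximum entry of a vector over an index set. -/
def vmaxOn {k : ℕ} (S : Set (Fin k)) (u : Fin k → ℝ) : ℝ := ⨆ i ∈ S, u i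

/-- The support of a vector: indices with positive entries. -/
def supp {k : ℕ} (u : Fin k → ℝ) : Set (Fin k) := {i | 0 < u i}

/-- The set of indices where `u` attains its maximum entry. -/
def suppmax {k : ℕ} (u : Fin k → ℝ) : Set (Fin k) := {i | ∀ j, u j ≤ u i}

/-- The set of indices where `u` attains its minimum entry. -/
def suppmin {k : ℕ} (u : Fin k → ℝ) : Set (Fin k) := {i | ∀ j, u i ≤ u j}

variable {m n : ℕ}

/-- `f_R(x,y) = max(Ry) − xᵀRy`. -/
def fR (R : Matrix (Fin m) (Fin n) ℝ) (x : Fin m → ℝ) (y : Fin n → ℝ) : ℝ :=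
  vmax (R.mulVec y) - x ⬝ᵥ R.mulVec y

/-- `f_C(x,y) = max(Cᵀx) − xᵀCy`. -/
def fC (C : Matrix (Fin m) (Fin n) ℝ) (x : Fin m → ℝ) (y : Fin n → ℝ) : ℝ :=
  vmax (Matrix.vecMul x C) - x ⬝ᵥ C.mulVec y

/-- `f(x,y) = max{f_R(x,y), f_C(x,y)}`. -/
def fNE (R C : Matrix (Fin m) (Fin n) ℝ) (x : Fin m → ℝ) (y : Fin n → ℝ) : ℝ :=
  max (fR R x y) (fC C x y)

/-- `S_R(y) = suppmax(Ry)`. -/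
def SR (R : Matrix (Fin m) (Fin n) ℝ) (y : Fin n → ℝ) : Set (Fin m) := suppmax (R.mulVec y)

/-- `S_C(x) = suppmax(Cᵀx)`. -/
def SC (C : Matrix (Fin m) (Fin n) ℝ) (x : Fin m → ℝ) : Set (Fin n) := suppmax (Matrix.vecMul x C)

/-- `g` has right (one-sided) derivative `d` at `0`: `lim_{θ→0⁺} (g θ − g 0)/θ = d`. -/
def HasPosDeriv (g : ℝ → ℝ) (d : ℝ) : Prop :=
  Tendsto (fun θ : ℝ => (g θ - g 0) / θ) (nhdsWithin 0 (Set.Ioi 0)) (nhds d)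

/-- `(x,y)` is a stationary point: for every `(x',y')` in the product simplex, the scaled
directional derivative `Df(x,y,x',y')` of `f` exists and is nonnegative. -/
def IsStationary (R C : Matrix (Fin m) (Fin n) ℝ) (x : Fin m → ℝ) (y : Fin n → ℝ) : Prop :=
  ∀ x' ∈ Δ m, ∀ y' ∈ Δ n, ∃ d : ℝ,
    HasPosDeriv (fun θ : ℝ => fNE R C (x + θ • (x' - x)) (y + θ • (y' - y))) d ∧ 0 ≤ d

/-- The function `T(x,y,x',y',ρ,w,z)`. -/
def Tfun (R C : Matrix (Fin m) (Fin n) ℝ) (x : Fin m → ℝ) (y : Fin n → ℝ)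
    (x' : Fin m → ℝ) (y' : Fin n → ℝ) (ρ : ℝ) (w : Fin m → ℝ) (z : Fin n → ℝ) : ℝ :=
  ρ * (w ⬝ᵥ R.mulVec y' - x ⬝ᵥ R.mulVec y' - x' ⬝ᵥ R.mulVec y + x ⬝ᵥ R.mulVec y)
    + (1 - ρ) * (x' ⬝ᵥ C.mulVec z - x ⬝ᵥ C.mulVec y' - x' ⬝ᵥ C.mulVec y + x ⬝ᵥ C.mulVec y)

/-- Feasibility for the tuple `(ρ,w,z)`: `ρ ∈ [0,1]`, `w ∈ Δ_m` with `supp w ⊆ S_R(y)`,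
`z ∈ Δ_n` with `supp z ⊆ S_C(x)`. -/
def dualFeasible (R C : Matrix (Fin m) (Fin n) ℝ) (x : Fin m → ℝ) (y : Fin n → ℝ)
    (ρ : ℝ) (w : Fin m → ℝ) (z : Fin n → ℝ) : Prop :=
  ρ ∈ Set.Icc (0:ℝ) 1 ∧ w ∈ Δ m ∧ supp w ⊆ SR R y ∧ z ∈ Δ n ∧ supp z ⊆ SC C x

/-- `max_{ρ,w,z} T(x,y,x',y',ρ,w,z)` over feasible `(ρ,w,z)`. -/
def innerMax (R C : Matrix (Fin m) (Fin n) ℝ) (x : Fin m → ℝ) (y : Fin n → ℝ)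
    (x' : Fin m → ℝ) (y' : Fin n → ℝ) : ℝ :=
  sSup {t : ℝ | ∃ ρ w z, dualFeasible R C x y ρ w z ∧ t = Tfun R C x y x' y' ρ w z}

/-- `V(x,y) = min_{(x',y') ∈ Δ_m×Δ_n} max_{ρ,w,z} T(x,y,x',y',ρ,w,z)`. -/
def Vval (R C : Matrix (Fin m) (Fin n) ℝ) (x : Fin m → ℝ) (y : Fin n → ℝ) : ℝ :=
  sInf {t : ℝ | ∃ x' ∈ Δ m, ∃ y' ∈ Δ n, t = innerMax R C x y x' y'}

/-- `min_{(x',y') ∈ Δ_m×Δ_n} T(x,y,x',y',ρ,w,z)`. -/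
def innerMin (R C : Matrix (Fin m) (Fin n) ℝ) (x : Fin m → ℝ) (y : Fin n → ℝ)
    (ρ : ℝ) (w : Fin m → ℝ) (z : Fin n → ℝ) : ℝ :=
  sInf {t : ℝ | ∃ x' ∈ Δ m, ∃ y' ∈ Δ n, t = Tfun R C x y x' y' ρ w z}

/-- `(ρ,w,z)` is a dual solution at `(x,y)`. -/
def IsDualSolution (R C : Matrix (Fin m) (Fin n) ℝ) (x : Fin m → ℝ) (y : Fin n → ℝ)
    (ρ : ℝ) (w : Fin m → ℝ) (z : Fin n → ℝ) : Prop :=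
  dualFeasible R C x y ρ w z ∧ Vval R C x y = innerMin R C x y ρ w z

/-- `(x,y)` is an `ε`-approximate Nash equilibrium. -/
def IsEpsNash (R C : Matrix (Fin m) (Fin n) ℝ) (x : Fin m → ℝ) (y : Fin n → ℝ) (ε : ℝ) : Prop :=
  (∀ x' ∈ Δ m, x' ⬝ᵥ R.mulVec y ≤ x ⬝ᵥ R.mulVec y + ε) ∧
  (∀ y' ∈ Δ n, x ⬝ᵥ C.mulVec y' ≤ x ⬝ᵥ C.mulVec y + ε)

/-- A Nash equilibrium is a `0`-approximate Nash equilibrium. -/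
def IsNash (R C : Matrix (Fin m) (Fin n) ℝ) (x : Fin m → ℝ) (y : Fin n → ℝ) : Prop :=
  IsEpsNash R C x y 0

/-- `λ* = (w*−x*)ᵀRz*`. -/
def lamStar (R : Matrix (Fin m) (Fin n) ℝ) (xs ws : Fin m → ℝ) (zs : Fin n → ℝ) : ℝ :=
  (ws - xs) ⬝ᵥ R.mulVec zs

/-- `μ* = w*ᵀC(z*−y*)`. -/
def muStar (C : Matrix (Fin m) (Fin n) ℝ) (ws : Fin m → ℝ) (ys zs : Fin n → ℝ) : ℝ :=
  ws ⬝ᵥ C.mulVec (zs - ys)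

/-- `p* = f_R(x*,z*)/(f_R(x*,z*)+f_C(w*,z*)−f_R(w*,z*))` (`= 0` if the denominator is `0`,
by the real-division-by-zero convention). -/
def pstar (R C : Matrix (Fin m) (Fin n) ℝ) (xs ws : Fin m → ℝ) (zs : Fin n → ℝ) : ℝ :=
  fR R xs zs / (fR R xs zs + fC C ws zs - fR R ws zs)

/-- `q* = f_C(w*,y*)/(f_C(w*,y*)+f_R(w*,z*)−f_C(w*,z*))` (`= 0` if the denominator is `0`). -/
def qstar (R C : Matrix (Fin m) (Fin n) ℝ) (ws : Fin m → ℝ) (ys zs : Fin n → ℝ) : ℝ :=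
  fC C ws ys / (fC C ws ys + fR R ws zs - fC C ws zs)

/-- The adjusted pair `(ũ,ṽ)` of Method 3. -/
def tildeUV (R C : Matrix (Fin m) (Fin n) ℝ) (xs : Fin m → ℝ) (ys : Fin n → ℝ)
    (ws : Fin m → ℝ) (zs : Fin n → ℝ) : (Fin m → ℝ) × (Fin n → ℝ) :=
  if fR R ws zs ≤ fC C ws zs then
    (pstar R C xs ws zs • ws + (1 - pstar R C xs ws zs) • xs, zs)
  else
    (ws, qstar R C ws ys zs • zs + (1 - qstar R C ws ys zs) • ys)

section Aux
variable {k : ℕ}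

def maxOn (S : Set (Fin k)) (u : Fin k → ℝ) : ℝ := sSup (u '' S)

lemma exists_forall_le (u : Fin (k+1) → ℝ) : ∃ i, ∀ j, u j ≤ u i := by
  obtain ⟨i, -, hi⟩ := Finset.exists_max_image Finset.univ u ⟨0, Finset.mem_univ 0⟩
  exact ⟨i, fun j => hi j (Finset.mem_univ j)⟩

lemma suppmax_nonempty (u : Fin (k+1) → ℝ) : (suppmax u).Nonempty := exists_forall_le u

lemma le_vmax (u : Fin (k+1) → ℝ) (j : Fin (k+1)) : u j ≤ vmax u :=
  le_ciSup (Set.Finite.bddAbove (Set.finite_range u)) j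

lemma vmax_le {u : Fin (k+1) → ℝ} {c : ℝ} (h : ∀ j, u j ≤ c) : vmax u ≤ c := ciSup_le h

lemma vmax_eq_of_mem {u : Fin (k+1) → ℝ} {i : Fin (k+1)} (hi : i ∈ suppmax u) :
    vmax u = u i := le_antisymm (vmax_le hi) (le_vmax u i)

lemma le_maxOn {S : Set (Fin k)} {u : Fin k → ℝ} {i : Fin k} (hi : i ∈ S) :
    u i ≤ maxOn S u :=
  le_csSup (Set.Finite.bddAbove ((Set.toFinite S).image u)) ⟨i, hi, rfl⟩

lemma maxOn_le {S : Set (Fin k)} {u : Fin k → ℝ} {c : ℝ} (hS : S.Nonempty)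
    (h : ∀ i ∈ S, u i ≤ c) : maxOn S u ≤ c :=
  csSup_le (hS.image u) (by rintro t ⟨i, hi, rfl⟩; exact h i hi)

lemma exists_maxOn {S : Set (Fin k)} (u : Fin k → ℝ) (hS : S.Nonempty) :
    ∃ i ∈ S, maxOn S u = u i := by
  have := (hS.image u).csSup_mem ((Set.toFinite S).image u)
  obtain ⟨i, hi, hmem⟩ := this
  exact ⟨i, hi, hmem.symm⟩

lemma maxOn_suppmax (u : Fin (k+1) → ℝ) : maxOn (suppmax u) u = vmax u := by
  obtain ⟨i, hi, h⟩ := exists_maxOn u (suppmax_nonempty u)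
  rw [h, ← vmax_eq_of_mem hi]

lemma maxOn_shift {S : Set (Fin k)} {a b : Fin k → ℝ} {c : ℝ} (hS : S.Nonempty)
    (ha : ∀ i ∈ S, a i = c) : maxOn S (fun i => a i + b i) = c + maxOn S b := by
  apply le_antisymm
  · exact maxOn_le hS (fun i hi => by rw [ha i hi]; exact add_le_add_right (le_maxOn hi) c)
  · obtain ⟨i, hi, h⟩ := exists_maxOn b hS
    rw [h, ← ha i hi]; exact le_maxOn (u := fun i => a i + b i) hi

lemma dot_le_maxOn {w v : Fin (k+1) → ℝ} {S : Set (Fin (k+1))} (hw : w ∈ Δ (k+1))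
    (hs : supp w ⊆ S) (hS : S.Nonempty) : w ⬝ᵥ v ≤ maxOn S v := by
  have h : ∀ i, w i * v i ≤ w i * maxOn S v := by
    intro i
    rcases eq_or_lt_of_le (hw.1 i) with h | h
    · rw [← h]; simp
    · exact mul_le_mul_of_nonneg_left (le_maxOn (hs h)) h.le
  calc w ⬝ᵥ v ≤ ∑ i, w i * maxOn S v := Finset.sum_le_sum (fun i _ => h i)
    _ = (∑ i, w i) * maxOn S v := by rw [Finset.sum_mul]
    _ = maxOn S v := by rw [hw.2, one_mul]

lemma dot_le_vmax' {w v : Fin (k+1) → ℝ} (hw : w ∈ Δ (k+1)) : w ⬝ᵥ v ≤ vmax v := by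
  have h : ∀ i, w i * v i ≤ w i * vmax v := fun i => by
    rcases eq_or_lt_of_le (hw.1 i) with h | h
    · rw [← h]; simp
    · exact mul_le_mul_of_nonneg_left (le_vmax v i) h.le
  calc w ⬝ᵥ v ≤ ∑ i, w i * vmax v := Finset.sum_le_sum (fun i _ => h i)
    _ = (∑ i, w i) * vmax v := by rw [Finset.sum_mul]
    _ = vmax v := by rw [hw.2, one_mul]

lemma single_mem_Δ (i : Fin (k+1)) : Pi.single i (1:ℝ) ∈ Δ (k+1) := by
  constructor
  · intro j
    rcases eq_or_ne j i with rfl | h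
    · simp
    · simp [Pi.single_eq_of_ne h]
  · simp

lemma supp_single_subset {i : Fin (k+1)} {S : Set (Fin (k+1))} (hi : i ∈ S) :
    supp (Pi.single i (1:ℝ)) ⊆ S := by
  intro j hj
  rcases eq_or_ne j i with rfl | h
  · exact hi
  · simp [supp, Pi.single_eq_of_ne h] at hj

lemma single_dot (i : Fin (k+1)) (v : Fin (k+1) → ℝ) : Pi.single i (1:ℝ) ⬝ᵥ v = v i := by
  simp [dotProduct, Pi.single_apply, Finset.sum_ite_eq']


lemma affine_sup (a b : Fin (k+1) → ℝ) :
    ∃ θ₀ > 0, ∀ θ ∈ Set.Icc (0:ℝ) θ₀,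
      vmax (fun i => a i + θ * b i) = vmax a + θ * maxOn (suppmax a) b := by
  obtain ⟨i₀, hi₀, hb₀⟩ := exists_maxOn b (suppmax_nonempty a)
  set c : Fin (k+1) → ℝ := fun i =>
    if a i₀ ≤ a i then 1 else (a i₀ - a i) / (|b i - b i₀| + 1) with hc
  have hcpos : ∀ i, 0 < c i := by
    intro i
    rw [hc]
    dsimp only
    split_ifs with h
    · norm_num
    · exact div_pos (by linarith [not_le.1 h]) (by positivity)
  refine ⟨Finset.univ.inf' ⟨i₀, Finset.mem_univ i₀⟩ c, ?_, ?_⟩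
  · refine (Finset.lt_inf'_iff _).2 ?_
    exact fun i _ => hcpos i
  · rintro θ ⟨hθ0, hθ₁⟩
    have key : ∀ i, a i + θ * b i ≤ a i₀ + θ * b i₀ := by
      intro i
      have hθi : θ ≤ c i := le_trans hθ₁ (Finset.inf'_le c (Finset.mem_univ i))
      by_cases h : a i₀ ≤ a i
      · have hai : a i = a i₀ := le_antisymm (hi₀ i) h
        have himem : i ∈ suppmax a := fun j => (hi₀ j).trans h
        have : b i ≤ b i₀ := hb₀ ▸ le_maxOn himem
        nlinarith
      · have hgap : 0 < a i₀ - a i := by linarith [not_le.1 h]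
        have hci : c i = (a i₀ - a i) / (|b i - b i₀| + 1) := by rw [hc]; simp [h]
        have h1 : θ * (|b i - b i₀| + 1) ≤ a i₀ - a i := by
          rw [hci] at hθi
          rw [← le_div_iff₀ (by positivity)]
          exact hθi
        have h2 : b i - b i₀ ≤ |b i - b i₀| := le_abs_self _
        nlinarith [abs_nonneg (b i - b i₀), mul_le_mul_of_nonneg_left h2 hθ0]
    have h1 : vmax (fun i => a i + θ * b i) = a i₀ + θ * b i₀ :=
      le_antisymm (vmax_le key) (le_vmax (fun i => a i + θ * b i) i₀)
    rw [h1, ← vmax_eq_of_mem hi₀, hb₀]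

lemma quad_max_deriv_lt {c1 d1 q1 c2 d2 q2 θ₀ : ℝ} {A B : ℝ → ℝ} (hθ₀ : 0 < θ₀)
    (hA : ∀ θ ∈ Set.Icc (0:ℝ) θ₀, A θ = c1 + θ * d1 - θ^2 * q1)
    (hB : ∀ θ ∈ Set.Icc (0:ℝ) θ₀, B θ = c2 + θ * d2 - θ^2 * q2)
    (hc : c2 < c1) :
    HasPosDeriv (fun θ => max (A θ) (B θ)) d1 := by
  have h0A : A 0 = c1 := by simpa using hA 0 ⟨le_refl 0, hθ₀.le⟩
  have h0B : B 0 = c2 := by simpa using hB 0 ⟨le_refl 0, hθ₀.le⟩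
  have hIoo : Set.Ioo (0:ℝ) θ₀ ∈ nhdsWithin (0:ℝ) (Set.Ioi 0) :=
    Ioo_mem_nhdsGT_of_mem ⟨le_refl 0, hθ₀⟩
  have hpoly : Tendsto (fun θ : ℝ => (c1 + θ * d1 - θ^2 * q1) - (c2 + θ * d2 - θ^2 * q2))
      (nhdsWithin 0 (Set.Ioi 0)) (nhds (c1 - c2)) := by
    have hcont : Continuous fun θ : ℝ => (c1 + θ * d1 - θ^2 * q1) - (c2 + θ * d2 - θ^2 * q2) := by
      continuity
    have h := (hcont.tendsto 0).mono_left (nhdsWithin_le_nhds (s := Set.Ioi (0:ℝ)))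
    norm_num at h
    exact h
  have hgt : ∀ᶠ θ in nhdsWithin (0:ℝ) (Set.Ioi 0),
      (c2 + θ * d2 - θ^2 * q2) < (c1 + θ * d1 - θ^2 * q1) := by
    have := hpoly.eventually (eventually_gt_nhds (sub_pos.2 hc))
    filter_upwards [this] with θ h using by linarith
  have heq : ∀ᶠ θ in nhdsWithin (0:ℝ) (Set.Ioi 0),
      (max (A θ) (B θ) - max (A 0) (B 0)) / θ = d1 - θ * q1 := by
    filter_upwards [hIoo, hgt] with θ hθ hltθ
    have hmem : θ ∈ Set.Icc (0:ℝ) θ₀ := ⟨hθ.1.le, hθ.2.le⟩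
    rw [hA θ hmem, hB θ hmem, h0A, h0B, max_eq_left hltθ.le, max_eq_left hc.le,
      div_eq_iff (ne_of_gt hθ.1)]
    ring
  have hlim : Tendsto (fun θ : ℝ => d1 - θ * q1) (nhdsWithin (0:ℝ) (Set.Ioi 0)) (nhds d1) := by
    have hcont : Continuous fun θ : ℝ => d1 - θ * q1 := by continuity
    have h := (hcont.tendsto 0).mono_left (nhdsWithin_le_nhds (s := Set.Ioi (0:ℝ)))
    norm_num at h
    exact h
  exact hlim.congr' (EventuallyEq.symm heq)

lemma quad_max_deriv_eq {c1 d1 q1 c2 d2 q2 θ₀ : ℝ} {A B : ℝ → ℝ} (hθ₀ : 0 < θ₀)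
    (hA : ∀ θ ∈ Set.Icc (0:ℝ) θ₀, A θ = c1 + θ * d1 - θ^2 * q1)
    (hB : ∀ θ ∈ Set.Icc (0:ℝ) θ₀, B θ = c2 + θ * d2 - θ^2 * q2)
    (hc : c1 = c2) :
    HasPosDeriv (fun θ => max (A θ) (B θ)) (max d1 d2) := by
  have h0A : A 0 = c1 := by simpa using hA 0 ⟨le_refl 0, hθ₀.le⟩
  have h0B : B 0 = c2 := by simpa using hB 0 ⟨le_refl 0, hθ₀.le⟩
  have hIoo : Set.Ioo (0:ℝ) θ₀ ∈ nhdsWithin (0:ℝ) (Set.Ioi 0) :=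
    Ioo_mem_nhdsGT_of_mem ⟨le_refl 0, hθ₀⟩
  have heq : ∀ᶠ θ in nhdsWithin (0:ℝ) (Set.Ioi 0),
      (max (A θ) (B θ) - max (A 0) (B 0)) / θ = max (d1 - θ * q1) (d2 - θ * q2) := by
    filter_upwards [hIoo] with θ hθ
    have hmem : θ ∈ Set.Icc (0:ℝ) θ₀ := ⟨hθ.1.le, hθ.2.le⟩
    have hθpos : 0 < θ := hθ.1
    rw [hA θ hmem, hB θ hmem, h0A, h0B, ← hc, max_self]
    rw [← max_sub_sub_right, ← max_div_div_right hθpos.le]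
    congr 1 <;> (rw [div_eq_iff (ne_of_gt hθpos)]; ring)
  have hlim : Tendsto (fun θ : ℝ => max (d1 - θ * q1) (d2 - θ * q2))
      (nhdsWithin (0:ℝ) (Set.Ioi 0)) (nhds (max d1 d2)) := by
    have hcont : Continuous fun θ : ℝ => max (d1 - θ * q1) (d2 - θ * q2) := by continuity
    have h := (hcont.tendsto 0).mono_left (nhdsWithin_le_nhds (s := Set.Ioi (0:ℝ)))
    norm_num at h
    exact h
  exact hlim.congr' (EventuallyEq.symm heq)


end Aux


section Mat
variable {m n : ℕ}

def TRv (R : Matrix (Fin (m+1)) (Fin (n+1)) ℝ) (x x' : Fin (m+1) → ℝ)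
    (y y' : Fin (n+1) → ℝ) : ℝ :=
  maxOn (SR R y) (R.mulVec y') - x ⬝ᵥ R.mulVec y' - x' ⬝ᵥ R.mulVec y + x ⬝ᵥ R.mulVec y

def TCv (C : Matrix (Fin (m+1)) (Fin (n+1)) ℝ) (x x' : Fin (m+1) → ℝ)
    (y y' : Fin (n+1) → ℝ) : ℝ :=
  maxOn (SC C x) (Matrix.vecMul x' C) - x ⬝ᵥ C.mulVec y' - x' ⬝ᵥ C.mulVec y + x ⬝ᵥ C.mulVec y

lemma fC_eq_fR (C : Matrix (Fin (m+1)) (Fin (n+1)) ℝ) (x : Fin (m+1) → ℝ)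
    (y : Fin (n+1) → ℝ) : fC C x y = fR Cᵀ y x := by
  rw [fC, fR, Matrix.mulVec_transpose, dotProduct_mulVec, dotProduct_comm]

lemma SC_eq_SR (C : Matrix (Fin (m+1)) (Fin (n+1)) ℝ) (x : Fin (m+1) → ℝ) :
    SC C x = SR Cᵀ x := by
  rw [SC, SR, Matrix.mulVec_transpose]

lemma TCv_eq_TRv (C : Matrix (Fin (m+1)) (Fin (n+1)) ℝ) (x x' : Fin (m+1) → ℝ)
    (y y' : Fin (n+1) → ℝ) : TCv C x x' y y' = TRv Cᵀ y y' x x' := by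
  rw [TCv, TRv, SC_eq_SR, Matrix.mulVec_transpose, Matrix.mulVec_transpose]
  rw [show y ⬝ᵥ Matrix.vecMul x' C = x' ⬝ᵥ C.mulVec y by
      rw [dotProduct_mulVec, dotProduct_comm],
    show y' ⬝ᵥ Matrix.vecMul x C = x ⬝ᵥ C.mulVec y' by
      rw [dotProduct_mulVec, dotProduct_comm],
    show y ⬝ᵥ Matrix.vecMul x C = x ⬝ᵥ C.mulVec y by
      rw [dotProduct_mulVec, dotProduct_comm]]
  ring

lemma fR_expand (R : Matrix (Fin (m+1)) (Fin (n+1)) ℝ) (x x' : Fin (m+1) → ℝ)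
    (y y' : Fin (n+1) → ℝ) :
    ∃ θ₀ > 0, ∀ θ ∈ Set.Icc (0:ℝ) θ₀,
      fR R (x + θ • (x' - x)) (y + θ • (y' - y)) =
        fR R x y + θ * (TRv R x x' y y' - fR R x y)
          - θ^2 * ((x' - x) ⬝ᵥ R.mulVec (y' - y)) := by
  set a := R.mulVec y with ha
  set b := R.mulVec (y' - y) with hb
  obtain ⟨θ₀, hθ₀, hsup⟩ := affine_sup a b
  refine ⟨θ₀, hθ₀, fun θ hθ => ?_⟩
  have hmv : R.mulVec (y + θ • (y' - y)) = fun i => a i + θ * b i := by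
    funext i
    rw [Matrix.mulVec_add, Matrix.mulVec_smul]
    simp [smul_eq_mul]
    rfl
  have hab : R.mulVec y' = fun i => a i + b i := by
    funext i
    rw [hb, Matrix.mulVec_sub]
    simp
    rw [ha]; ring
  have h1 : maxOn (SR R y) (R.mulVec y') = vmax a + maxOn (SR R y) b := by
    rw [hab]
    exact maxOn_shift (suppmax_nonempty a) (fun i hi => (vmax_eq_of_mem hi).symm)
  have hfun : (fun i => a i + θ * b i) = a + θ • b := by
    funext i; simp [smul_eq_mul]
  rw [fR, hmv, hsup θ hθ, hfun]
  rw [fR, TRv, h1, hab, show SR R y = suppmax a from rfl]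
  have hfun2 : (fun i => a i + b i) = a + b := rfl
  rw [hfun2]
  simp only [dotProduct_add, add_dotProduct, dotProduct_smul, smul_dotProduct,
    sub_dotProduct, smul_eq_mul]
  ring

lemma innerMax_eq (R C : Matrix (Fin (m+1)) (Fin (n+1)) ℝ) (x x' : Fin (m+1) → ℝ)
    (y y' : Fin (n+1) → ℝ) :
    innerMax R C x y x' y' = max (TRv R x x' y y') (TCv C x x' y y') := by
  obtain ⟨i₁, hi₁, hi₁v⟩ := exists_maxOn (R.mulVec y') (suppmax_nonempty (R.mulVec y))
  obtain ⟨j₁, hj₁, hj₁v⟩ := exists_maxOn (Matrix.vecMul x' C) (suppmax_nonempty (Matrix.vecMul x C))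
  obtain ⟨i₀, hi₀⟩ := suppmax_nonempty (R.mulVec y)
  obtain ⟨j₀, hj₀⟩ := suppmax_nonempty (Matrix.vecMul x C)
  have hub : ∀ t ∈ {t : ℝ | ∃ ρ w z, dualFeasible R C x y ρ w z ∧ t = Tfun R C x y x' y' ρ w z},
      t ≤ max (TRv R x x' y y') (TCv C x x' y y') := by
    rintro t ⟨ρ, w, z, ⟨⟨hρ0, hρ1⟩, hw, hws, hz, hzs⟩, rfl⟩
    have h1 : w ⬝ᵥ R.mulVec y' ≤ maxOn (SR R y) (R.mulVec y') :=
      dot_le_maxOn hw hws ⟨i₀, hi₀⟩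
    have h2 : x' ⬝ᵥ C.mulVec z ≤ maxOn (SC C x) (Matrix.vecMul x' C) := by
      rw [dotProduct_mulVec, dotProduct_comm]
      exact dot_le_maxOn hz hzs ⟨j₀, hj₀⟩
    have hTR : w ⬝ᵥ R.mulVec y' - x ⬝ᵥ R.mulVec y' - x' ⬝ᵥ R.mulVec y + x ⬝ᵥ R.mulVec y
        ≤ TRv R x x' y y' := by rw [TRv]; linarith
    have hTC : x' ⬝ᵥ C.mulVec z - x ⬝ᵥ C.mulVec y' - x' ⬝ᵥ C.mulVec y + x ⬝ᵥ C.mulVec y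
        ≤ TCv C x x' y y' := by rw [TCv]; linarith
    rw [Tfun]
    set M := max (TRv R x x' y y') (TCv C x x' y y') with hM
    have e1 : ρ * (w ⬝ᵥ R.mulVec y' - x ⬝ᵥ R.mulVec y' - x' ⬝ᵥ R.mulVec y + x ⬝ᵥ R.mulVec y)
        ≤ ρ * M := mul_le_mul_of_nonneg_left (hTR.trans (le_max_left _ _)) hρ0
    have e2 : (1 - ρ) * (x' ⬝ᵥ C.mulVec z - x ⬝ᵥ C.mulVec y' - x' ⬝ᵥ C.mulVec y + x ⬝ᵥ C.mulVec y)
        ≤ (1 - ρ) * M :=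
      mul_le_mul_of_nonneg_left (hTC.trans (le_max_right _ _)) (by linarith)
    have e3 : ρ * M + (1 - ρ) * M = M := by ring
    linarith
  have hmemR : TRv R x x' y y' ∈
      {t : ℝ | ∃ ρ w z, dualFeasible R C x y ρ w z ∧ t = Tfun R C x y x' y' ρ w z} := by
    refine ⟨1, Pi.single i₁ 1, Pi.single j₀ 1,
      ⟨⟨zero_le_one, le_refl 1⟩, single_mem_Δ i₁, supp_single_subset hi₁,
        single_mem_Δ j₀, supp_single_subset hj₀⟩, ?_⟩
    rw [Tfun, TRv, single_dot, SR, ← hi₁v]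
    ring
  have hmemC : TCv C x x' y y' ∈
      {t : ℝ | ∃ ρ w z, dualFeasible R C x y ρ w z ∧ t = Tfun R C x y x' y' ρ w z} := by
    refine ⟨0, Pi.single i₀ 1, Pi.single j₁ 1,
      ⟨⟨le_refl 0, zero_le_one⟩, single_mem_Δ i₀, supp_single_subset hi₀,
        single_mem_Δ j₁, supp_single_subset hj₁⟩, ?_⟩
    have : x' ⬝ᵥ C.mulVec (Pi.single j₁ 1) = Matrix.vecMul x' C j₁ := by
      rw [dotProduct_mulVec, dotProduct_comm, single_dot]
    rw [Tfun, TCv, this, SC, ← hj₁v]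
    ring
  apply le_antisymm
  · exact csSup_le ⟨_, hmemR⟩ hub
  · apply le_csSup ⟨_, hub⟩
    rcases max_cases (TRv R x x' y y') (TCv C x x' y y') with ⟨h, -⟩ | ⟨h, -⟩ <;> rw [h]
    · exact hmemR
    · exact hmemC

lemma fR_nonneg (R : Matrix (Fin (m+1)) (Fin (n+1)) ℝ) {x : Fin (m+1) → ℝ}
    (y : Fin (n+1) → ℝ) (hx : x ∈ Δ (m+1)) : 0 ≤ fR R x y :=
  sub_nonneg.2 (dot_le_vmax' hx)

lemma fC_nonneg (C : Matrix (Fin (m+1)) (Fin (n+1)) ℝ) (x : Fin (m+1) → ℝ)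
    {y : Fin (n+1) → ℝ} (hy : y ∈ Δ (n+1)) : 0 ≤ fC C x y := by
  rw [fC_eq_fR]
  exact fR_nonneg Cᵀ x hy

lemma TRv_self (R : Matrix (Fin (m+1)) (Fin (n+1)) ℝ) (x : Fin (m+1) → ℝ)
    (y : Fin (n+1) → ℝ) : TRv R x x y y = fR R x y := by
  rw [TRv, SR, maxOn_suppmax, fR]
  ring

lemma TCv_self (C : Matrix (Fin (m+1)) (Fin (n+1)) ℝ) (x : Fin (m+1) → ℝ)
    (y : Fin (n+1) → ℝ) : TCv C x x y y = fC C x y := by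
  rw [TCv_eq_TRv, TRv_self, fC_eq_fR]

lemma mulVec_entry_mem (R : Matrix (Fin (m+1)) (Fin (n+1)) ℝ)
    (hR : ∀ i j, R i j ∈ Set.Icc (0:ℝ) 1) {y : Fin (n+1) → ℝ} (hy : y ∈ Δ (n+1))
    (i : Fin (m+1)) : (R.mulVec y) i ∈ Set.Icc (0:ℝ) 1 := by
  have hrfl : (R.mulVec y) i = ∑ j, R i j * y j := rfl
  constructor
  · rw [hrfl]
    exact Finset.sum_nonneg fun j _ => mul_nonneg (hR i j).1 (hy.1 j)
  · rw [hrfl]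
    calc ∑ j, R i j * y j ≤ ∑ j, y j :=
          Finset.sum_le_sum fun j _ => by nlinarith [(hR i j).1, (hR i j).2, hy.1 j]
      _ = 1 := hy.2

lemma dot_mulVec_mem (R : Matrix (Fin (m+1)) (Fin (n+1)) ℝ)
    (hR : ∀ i j, R i j ∈ Set.Icc (0:ℝ) 1) {x : Fin (m+1) → ℝ} {y : Fin (n+1) → ℝ}
    (hx : x ∈ Δ (m+1)) (hy : y ∈ Δ (n+1)) : x ⬝ᵥ R.mulVec y ∈ Set.Icc (0:ℝ) 1 := by
  constructor
  · exact Finset.sum_nonneg fun i _ => mul_nonneg (hx.1 i) (mulVec_entry_mem R hR hy i).1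
  · have : ∀ i ∈ Finset.univ, x i * (R.mulVec y) i ≤ x i * 1 := fun i _ =>
      mul_le_mul_of_nonneg_left (mulVec_entry_mem R hR hy i).2 (hx.1 i)
    have h := Finset.sum_le_sum this
    simp only [mul_one] at h
    rw [dotProduct]
    exact h.trans_eq hx.2


end Mat

/-- `(x,y)` is a stationary point iff `V(x,y) = f_R(x,y) = f_C(x,y)`. -/
theorem stmt0 {m n : ℕ} (R C : Matrix (Fin (m+1)) (Fin (n+1)) ℝ)
    (hR : ∀ i j, R i j ∈ Set.Icc (0:ℝ) 1) (hC : ∀ i j, C i j ∈ Set.Icc (0:ℝ) 1)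
    (x : Fin (m+1) → ℝ) (y : Fin (n+1) → ℝ) (hx : x ∈ Δ (m+1)) (hy : y ∈ Δ (n+1)) :
    IsStationary R C x y ↔
      (Vval R C x y = fR R x y ∧ fR R x y = fC C x y) := by
  have expand : ∀ x' y', ∃ θ₀ > 0,
      (∀ θ ∈ Set.Icc (0:ℝ) θ₀,
        fR R (x + θ • (x' - x)) (y + θ • (y' - y)) =
          fR R x y + θ * (TRv R x x' y y' - fR R x y)
            - θ^2 * ((x' - x) ⬝ᵥ R.mulVec (y' - y))) ∧
      (∀ θ ∈ Set.Icc (0:ℝ) θ₀,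
        fC C (x + θ • (x' - x)) (y + θ • (y' - y)) =
          fC C x y + θ * (TCv C x x' y y' - fC C x y)
            - θ^2 * ((y' - y) ⬝ᵥ Cᵀ.mulVec (x' - x))) := by
    intro x' y'
    obtain ⟨θ₁, hθ₁, h1⟩ := fR_expand R x x' y y'
    obtain ⟨θ₂, hθ₂, h2⟩ := fR_expand Cᵀ y y' x x'
    refine ⟨min θ₁ θ₂, lt_min hθ₁ hθ₂, fun θ hθ => ?_, fun θ hθ => ?_⟩
    · exact h1 θ ⟨hθ.1, hθ.2.trans (min_le_left _ _)⟩
    · rw [fC_eq_fR, fC_eq_fR, TCv_eq_TRv]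
      exact h2 θ ⟨hθ.1, hθ.2.trans (min_le_right _ _)⟩
  have deriv_eq : ∀ x' y', fR R x y = fC C x y →
      HasPosDeriv (fun θ => fNE R C (x + θ • (x' - x)) (y + θ • (y' - y)))
        (max (TRv R x x' y y' - fR R x y) (TCv C x x' y y' - fC C x y)) := by
    intro x' y' hfc
    obtain ⟨θ₀, hθ₀, h1, h2⟩ := expand x' y'
    exact quad_max_deriv_eq hθ₀ h1 h2 hfc
  have h0R : 0 ≤ fR R x y := fR_nonneg R y hx
  have h0C : 0 ≤ fC C x y := fC_nonneg C x hy
  constructor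
  · intro hst
    have hfc : fR R x y = fC C x y := by
      by_contra hne
      rcases lt_or_gt_of_ne hne with hlt | hlt
      · -- fR < fC
        obtain ⟨j₁, hj₁⟩ := suppmax_nonempty (Matrix.vecMul x C)
        obtain ⟨θ₀, hθ₀, h1, h2⟩ := expand x (Pi.single j₁ 1)
        have hTC : TCv C x x y (Pi.single j₁ 1) = 0 := by
          rw [TCv]
          rw [show x ⬝ᵥ C.mulVec (Pi.single j₁ 1) = Matrix.vecMul x C j₁ by
            rw [dotProduct_mulVec, dotProduct_comm, single_dot]]
          rw [SC, maxOn_suppmax, vmax_eq_of_mem hj₁]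
          ring
        have hd := quad_max_deriv_lt hθ₀ h2 h1 hlt
        have hd' : HasPosDeriv
            (fun θ => fNE R C (x + θ • (x - x)) (y + θ • (Pi.single j₁ 1 - y)))
            (TCv C x x y (Pi.single j₁ 1) - fC C x y) := by
          rw [show (fun θ => fNE R C (x + θ • (x - x)) (y + θ • (Pi.single j₁ 1 - y)))
              = fun θ => max (fC C (x + θ • (x - x)) (y + θ • (Pi.single j₁ 1 - y)))
                  (fR R (x + θ • (x - x)) (y + θ • (Pi.single j₁ 1 - y))) from
            funext fun θ => max_comm _ _]
          exact hd
        obtain ⟨d, hdP, hd0⟩ := hst x hx (Pi.single j₁ 1) (single_mem_Δ j₁)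
        have hdd := tendsto_nhds_unique hdP hd'
        rw [hTC] at hdd
        linarith
      · -- fC < fR
        obtain ⟨i₁, hi₁⟩ := suppmax_nonempty (R.mulVec y)
        obtain ⟨θ₀, hθ₀, h1, h2⟩ := expand (Pi.single i₁ 1) y
        have hTR : TRv R x (Pi.single i₁ 1) y y = 0 := by
          rw [TRv, single_dot, SR, maxOn_suppmax, vmax_eq_of_mem hi₁]
          ring
        have hd' : HasPosDeriv
            (fun θ => fNE R C (x + θ • (Pi.single i₁ 1 - x)) (y + θ • (y - y)))
            (TRv R x (Pi.single i₁ 1) y y - fR R x y) := quad_max_deriv_lt hθ₀ h1 h2 hlt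
        obtain ⟨d, hdP, hd0⟩ := hst (Pi.single i₁ 1) (single_mem_Δ i₁) y hy
        have hdd := tendsto_nhds_unique hdP hd'
        rw [hTR] at hdd
        linarith
    have key : ∀ x' ∈ Δ (m+1), ∀ y' ∈ Δ (n+1),
        fR R x y ≤ innerMax R C x y x' y' := by
      intro x' hx' y' hy'
      obtain ⟨d, hdP, hd0⟩ := hst x' hx' y' hy'
      have hdd := tendsto_nhds_unique hdP (deriv_eq x' y' hfc)
      rw [innerMax_eq]
      rw [hdd] at hd0
      rcases le_max_iff.1 hd0 with h | h
      · exact le_trans (by linarith) (le_max_left _ _)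
      · exact le_trans (by linarith) (le_max_right _ _)
    have hmem : fR R x y ∈
        {t : ℝ | ∃ x' ∈ Δ (m+1), ∃ y' ∈ Δ (n+1), t = innerMax R C x y x' y'} := by
      refine ⟨x, hx, y, hy, ?_⟩
      rw [innerMax_eq, TRv_self, TCv_self, ← hfc, max_self]
    have hlb : ∀ t ∈ {t : ℝ | ∃ x' ∈ Δ (m+1), ∃ y' ∈ Δ (n+1), t = innerMax R C x y x' y'},
        fR R x y ≤ t := by
      rintro t ⟨x', hx', y', hy', rfl⟩
      exact key x' hx' y' hy'
    exact ⟨le_antisymm (csInf_le ⟨fR R x y, fun t ht => hlb t ht⟩ hmem)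
      (le_csInf ⟨_, hmem⟩ hlb), hfc⟩
  · rintro ⟨hV, hfc⟩ x' hx' y' hy'
    refine ⟨_, deriv_eq x' y' hfc, ?_⟩
    have hbdd : BddBelow {t : ℝ | ∃ x' ∈ Δ (m+1), ∃ y' ∈ Δ (n+1), t = innerMax R C x y x' y'} := by
      refine ⟨-2, ?_⟩
      rintro t ⟨x'', hx'', y'', hy'', rfl⟩
      rw [innerMax_eq]
      refine le_trans ?_ (le_max_left _ _)
      have h1 := (dot_mulVec_mem R hR hx hy'').2
      have h2 := (dot_mulVec_mem R hR hx'' hy).2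
      have h3 := (dot_mulVec_mem R hR hx hy).1
      obtain ⟨i₀, hi₀⟩ := suppmax_nonempty (R.mulVec y)
      have h4 : (0:ℝ) ≤ maxOn (SR R y) (R.mulVec y'') :=
        le_trans (mulVec_entry_mem R hR hy'' i₀).1 (le_maxOn hi₀)
      rw [TRv]
      linarith
    have hle : Vval R C x y ≤ innerMax R C x y x' y' :=
      csInf_le hbdd ⟨x', hx', y', hy', rfl⟩
    rw [hV, innerMax_eq] at hle
    rcases le_max_iff.1 hle with h | h
    · exact le_max_iff.2 (Or.inl (by linarith))
    · exact le_max_iff.2 (Or.inr (by linarith))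


end TS
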